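/- Let X ∈ ℝ^{n×d} and τ > 0. For y ∈ ℝⁿ let β̂(y) ∈ argmin_{β ∈ ℝᵈ} (1/2)‖y − Xβ‖₂² + τ‖β‖₁ be a Lasso solution and θ̂(y) = X β̂(y) the (unique) fitted value. Then for Lebesgue-almost every y ∈ ℝⁿ, the map θ̂ is differentiable at y with divergence equal to rank(X_{J₀ᶜ}), where J₀ = {i ∈ {1,…,d} : β̂_i(y) = 0}, J₀ᶜ is its complement, and X_{J₀ᶜ} is the submatrix of X consisting of the columns indexed by J₀ᶜ. -/

import Mathlib

/-!
The fitted value `θ̂(y) = X β̂(y)` is a Lipschitz function of `y` (comparing two solutions with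
their midpoint gives `‖θ̂ y - θ̂ y'‖² ≤ 2 ⟪y - y', θ̂ y - θ̂ y'⟫`), so by Rademacher it is
differentiable almost everywhere. Split `ℝⁿ` into the finitely many pieces on which `β̂` has a
fixed sign pattern; almost every `y` is a Lebesgue density point of its piece, and the tangent
cone of a set at a density point is the whole space. On the piece of `y`, `θ̂ z - θ̂ y` lies in the
column span `V` of the active columns, while by the KKT conditions `(z - θ̂ z) - (y - θ̂ y)` is
orthogonal to `V`. Passing to the derivative along the tangent cone, `Dθ̂(y)` is the orthogonal
projection onto `V`, whose trace is `dim V = rank X_{J₀ᶜ}`.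
-/

open Matrix MeasureTheory
open scoped Classical

/-- The divergence of a map `ℝⁿ → ℝⁿ` at `y`: the trace of its derivative,
`∑ i, ∂fᵢ/∂yᵢ (y)`. -/
noncomputable def divg {n : ℕ} (f : (Fin n → ℝ) → (Fin n → ℝ)) (y : Fin n → ℝ) : ℝ :=
  ∑ i, fderiv ℝ f y (Pi.single i 1) i

open Metric Filter Module Set Topology

section DensityPoint

variable {E : Type*} [NormedAddCommGroup E] [NormedSpace ℝ E] [MeasurableSpace E] [BorelSpace E]
  [FiniteDimensional ℝ E] {μ : Measure E} [μ.IsAddHaarMeasure] {s : Set E} {x : E}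

def IsDensityPoint {α : Type*} [PseudoMetricSpace α] [MeasurableSpace α] (μ : Measure α)
    (s : Set α) (x : α) : Prop :=
  Tendsto (fun r => μ (s ∩ closedBall x r) / μ (closedBall x r)) (𝓝[>] 0) (𝓝 1)

/-- A ball of radius `ε r` inside `closedBall x ((1 + ε) r)` fills the fixed proportion
`(ε / (1 + ε)) ^ dim E` of it, so near a density point of `s` it cannot miss `s`. -/
theorem IsDensityPoint.eventually_inter_closedBall_nonempty (h : IsDensityPoint μ s x) {ε : ℝ}
    (hε : 0 < ε) : ∀ᶠ r in 𝓝[>] 0, ∀ z ∈ closedBall x r, (s ∩ closedBall z (ε * r)).Nonempty := by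
  set c : ENNReal := ENNReal.ofReal ((ε / (1 + ε)) ^ finrank ℝ E)
  have hc : c ≠ 0 := (ENNReal.ofReal_pos.2 (by positivity)).ne'
  filter_upwards [self_mem_nhdsWithin, eventually_nhdsGT_zero_mul_left (by positivity : 0 < 1 + ε)
    (h.eventually (lt_mem_nhds (ENNReal.sub_lt_self ENNReal.one_ne_top one_ne_zero hc)))]
    with r (hr : 0 < r) hdens z hz
  by_contra hempty
  rw [not_nonempty_iff_eq_empty] at hempty
  set B := closedBall x ((1 + ε) * r)
  set b := closedBall z (ε * r)
  have hbB : b ⊆ B := closedBall_subset_closedBall' (by rw [mem_closedBall] at hz; linarith)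
  have hB₀ : μ B ≠ 0 := (measure_closedBall_pos μ x (by positivity)).ne'
  have hB : μ B ≠ ⊤ := measure_closedBall_lt_top.ne
  have hb : μ b = c * μ B := by
    rw [Measure.addHaar_closedBall' μ z (by positivity),
      Measure.addHaar_closedBall' μ x (by positivity), ← mul_assoc,
      ← ENNReal.ofReal_mul (by positivity), ← mul_pow]
    congr 3
    field_simp
  have hsB : s ∩ B ⊆ B \ b := fun w hw =>
    ⟨hw.2, fun hwb => (hempty ▸ ⟨hw.1, hwb⟩ : w ∈ (∅ : Set E))⟩
  have : μ (s ∩ B) / μ B ≤ 1 - c := calc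
    μ (s ∩ B) / μ B ≤ μ (B \ b) / μ B := by gcongr
    _ = (1 - c) * μ B / μ B := by
      rw [measure_sdiff hbB measurableSet_closedBall.nullMeasurableSet
        (hb ▸ ENNReal.mul_ne_top ENNReal.ofReal_ne_top hB), hb, ENNReal.sub_mul (fun _ _ => hB),
        one_mul]
    _ = 1 - c := ENNReal.mul_div_cancel_right hB₀ hB
  exact this.not_gt hdens

theorem IsDensityPoint.tangentConeAt_eq_univ (h : IsDensityPoint μ s x) :
    tangentConeAt ℝ s x = univ := by
  refine eq_univ_of_forall fun v => ?_
  rw [tangentConeAt_eq_biInter_closure, mem_iInter₂]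
  intro U hU
  obtain ⟨ρ, hρ, hρU⟩ := Metric.mem_nhds_iff.1 hU
  rw [Metric.mem_closure_iff]
  intro δ hδ
  set K := ‖v‖ + 1
  have hK : 0 < K := by positivity
  have hsmall : ∀ᶠ r in 𝓝[>] (0 : ℝ), r ∈ Ioo 0 (ρ / (1 + δ)) := Ioo_mem_nhdsGT (by positivity)
  obtain ⟨r, ⟨hr, hrρ⟩, hball⟩ := (hsmall.and
    (h.eventually_inter_closedBall_nonempty (show 0 < δ / (2 * K) by positivity))).exists
  set t := r / K
  have ht : 0 < t := by positivity
  have hmem : x + t • v ∈ closedBall x r := by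
    rw [mem_closedBall, dist_self_add_left, norm_smul, Real.norm_of_nonneg ht.le]
    calc t * ‖v‖ ≤ t * K := by gcongr; simp [K]
      _ = r := div_mul_cancel₀ r hK.ne'
  obtain ⟨z, hzs, hz⟩ := hball _ hmem
  rw [mem_closedBall, dist_eq_norm] at hz
  refine ⟨t⁻¹ • (z - x), smul_mem_smul (mem_univ _) ⟨hρU ?_, by simpa using hzs⟩, ?_⟩
  · have hv : ‖t • v‖ ≤ r := by simpa [dist_eq_norm] using hmem
    have hK1 : δ / (2 * K) ≤ δ := div_le_self hδ.le (by linarith [norm_nonneg v])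
    rw [mem_ball_zero_iff]
    calc ‖z - x‖ = ‖(z - (x + t • v)) + t • v‖ := by congr 1; abel
      _ ≤ δ / (2 * K) * r + r := (norm_add_le _ _).trans (add_le_add hz hv)
      _ ≤ (1 + δ) * r := by nlinarith
      _ < ρ := by rwa [lt_div_iff₀' (by positivity)] at hrρ
  · rw [dist_comm]
    calc dist (t⁻¹ • (z - x)) v = t⁻¹ * ‖z - (x + t • v)‖ := by
          have : t⁻¹ • (z - x) - v = t⁻¹ • (z - (x + t • v)) := by
            rw [sub_add_eq_sub_sub, smul_sub _ (z - x), inv_smul_smul₀ ht.ne']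
          rw [dist_eq_norm, this, norm_smul, Real.norm_of_nonneg (inv_nonneg.2 ht.le)]
      _ ≤ t⁻¹ * (δ / (2 * K) * r) := by gcongr
      _ = δ / 2 := by rw [show t = r / K from rfl]; field_simp
      _ < δ := half_lt_self hδ

end DensityPoint

theorem HasFDerivWithinAt.apply_mem_of_sub_mem {𝕜 E F : Type*} [NontriviallyNormedField 𝕜]
    [NormedAddCommGroup E] [NormedSpace 𝕜 E] [NormedAddCommGroup F] [NormedSpace 𝕜 F]
    {f : E → F} {f' : E →L[𝕜] F} {s : Set E} {x v : E} {K : Submodule 𝕜 F}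
    (hf : HasFDerivWithinAt f f' s x) (hK : IsClosed (K : Set F)) (hs : ∀ z ∈ s, f z - f x ∈ K)
    (hv : v ∈ tangentConeAt 𝕜 s x) : f' v ∈ K := by
  obtain ⟨_, l, _, c, d, hd₀, hds, hcd⟩ := exists_fun_of_mem_tangentConeAt hv
  exact hK.mem_of_tendsto (hf.lim hd₀ hds hcd) (hds.mono fun _ hn => K.smul_mem _ (hs _ hn))

theorem divg_eq_trace {n : ℕ} (f : (Fin n → ℝ) → (Fin n → ℝ)) (y : Fin n → ℝ) :
    divg f y = LinearMap.trace ℝ _ (fderiv ℝ f y : (Fin n → ℝ) →ₗ[ℝ] (Fin n → ℝ)) := by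
  rw [LinearMap.trace_eq_matrix_trace ℝ (Pi.basisFun ℝ (Fin n)), LinearMap.toMatrix_eq_toMatrix',
    Matrix.trace, divg]
  simp [LinearMap.toMatrix'_apply]

section LinearAlgebra

variable {m k : Type*} [Fintype m] [Fintype k]

/-- The hypotheses say that `L` is the orthogonal projection onto the column space of `A`. -/
theorem trace_eq_rank_of_map_mem_range_of_transpose_mulVec_sub_eq_zero (A : Matrix m k ℝ)
    (L : (m → ℝ) →ₗ[ℝ] (m → ℝ)) (hrange : ∀ v, L v ∈ LinearMap.range A.mulVecLin)
    (horth : ∀ v, Aᵀ *ᵥ (v - L v) = 0) :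
    LinearMap.trace ℝ _ L = A.rank := by
  have hproj : LinearMap.IsProj (LinearMap.range A.mulVecLin) L := by
    refine ⟨hrange, fun v hv => ?_⟩
    obtain ⟨u, hu⟩ := LinearMap.mem_range.1 (Submodule.sub_mem _ hv (hrange v))
    rw [Matrix.mulVecLin_apply] at hu
    have : (v - L v) ⬝ᵥ (v - L v) = 0 := by
      rw [← hu, dotProduct_comm, dotProduct_mulVec, ← mulVec_transpose, hu, horth, zero_dotProduct]
    exact (sub_eq_zero.1 (dotProduct_self_eq_zero.1 this)).symm
  exact hproj.trace

theorem sq_norm_le_dotProduct_self (u : m → ℝ) : ‖u‖ ^ 2 ≤ u ⬝ᵥ u := by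
  have h0 : 0 ≤ u ⬝ᵥ u := Finset.sum_nonneg fun i _ => mul_self_nonneg (u i)
  rw [← Real.le_sqrt (norm_nonneg _) h0, pi_norm_le_iff_of_nonneg (Real.sqrt_nonneg _)]
  intro i
  rw [Real.le_sqrt (norm_nonneg _) h0, Real.norm_eq_abs, sq_abs, sq]
  exact Finset.single_le_sum (fun j _ => mul_self_nonneg (u j)) (Finset.mem_univ i)

theorem dotProduct_le_card_mul_norm_mul_norm (w u : m → ℝ) :
    w ⬝ᵥ u ≤ Fintype.card m * (‖w‖ * ‖u‖) := by
  calc w ⬝ᵥ u ≤ ∑ _i : m, ‖w‖ * ‖u‖ := Finset.sum_le_sum fun i _ => calc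
        w i * u i ≤ ‖w i‖ * ‖u i‖ := by rw [← norm_mul]; exact Real.le_norm_self _
        _ ≤ ‖w‖ * ‖u‖ := by gcongr <;> exact norm_le_pi_norm _ i
    _ = _ := by simp

theorem lipschitzWith_of_dotProduct_le {f : (m → ℝ) → (m → ℝ)}
    (h : ∀ y y', (f y - f y') ⬝ᵥ (f y - f y') ≤ 2 * ((y - y') ⬝ᵥ (f y - f y'))) :
    LipschitzWith (2 * Fintype.card m) f := by
  refine LipschitzWith.of_dist_le_mul fun y y' => ?_
  rw [dist_eq_norm, dist_eq_norm]
  have key : ‖f y - f y'‖ ^ 2 ≤ 2 * Fintype.card m * ‖y - y'‖ * ‖f y - f y'‖ := calc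
    _ ≤ (f y - f y') ⬝ᵥ (f y - f y') := sq_norm_le_dotProduct_self _
    _ ≤ 2 * ((y - y') ⬝ᵥ (f y - f y')) := h y y'
    _ ≤ 2 * (Fintype.card m * (‖y - y'‖ * ‖f y - f y'‖)) := by
      gcongr; exact dotProduct_le_card_mul_norm_mul_norm _ _
    _ = _ := by ring
  push_cast
  rcases (norm_nonneg (f y - f y')).eq_or_lt with h0 | hpos
  · rw [← h0]; positivity
  · exact le_of_mul_le_mul_right (by nlinarith) hpos

end LinearAlgebra

theorem mulVec_eq_submatrix_mulVec {m k : Type*} [Fintype k] (X : Matrix m k ℝ) {β : k → ℝ}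
    {q : k → Prop} [Fintype {i // q i}] (hβ : ∀ i, β i ≠ 0 → q i) :
    X *ᵥ β = X.submatrix id (fun i : {i // q i} => (i : k)) *ᵥ fun i => β i := by
  ext r
  calc ∑ i, X r i * β i = ∑ i ∈ Finset.univ.filter q, X r i * β i :=
        (Finset.sum_filter_of_ne fun i _ hi => hβ i (right_ne_zero_of_mul hi)).symm
    _ = ∑ i : {i // q i}, X r i * β i := Finset.sum_subtype _ (by simp) _

theorem mulVec_sub_mem_range_submatrix {m k : Type*} [Fintype k] {X : Matrix m k ℝ}
    {β β' : k → ℝ} (hsign : ∀ i, SignType.sign (β i) = SignType.sign (β' i)) :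
    X *ᵥ β - X *ᵥ β' ∈
      LinearMap.range (X.submatrix id (fun i : {i // β' i ≠ 0} => (i : k))).mulVecLin := by
  have hsupp : ∀ i, β i ≠ 0 → β' i ≠ 0 := fun i hi => by
    rwa [← sign_ne_zero, ← hsign i, sign_ne_zero]
  refine ⟨(fun i : {i // β' i ≠ 0} => β i) - fun i : {i // β' i ≠ 0} => β' i, ?_⟩
  rw [mulVecLin_apply, mulVec_sub, ← mulVec_eq_submatrix_mulVec X hsupp,
    ← mulVec_eq_submatrix_mulVec X fun _ => id]

section Lasso

variable {m p : Type*} [Fintype m] [Fintype p] {X : Matrix m p ℝ} {τ : ℝ} {y y' : m → ℝ}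
  {β β' : p → ℝ}

variable (X τ) in
noncomputable def lassoObjective (y : m → ℝ) (β : p → ℝ) : ℝ :=
  (1 / 2) * (∑ i, (y i - (X *ᵥ β) i) ^ 2) + τ * ∑ i, |β i|

variable (X τ) in
def IsLassoSolution (y : m → ℝ) (β : p → ℝ) : Prop :=
  ∀ β', lassoObjective X τ y β ≤ lassoObjective X τ y β'

variable (X τ y β) in
theorem lassoObjective_add_single (i : p) (t : ℝ) :
    lassoObjective X τ y (β + Pi.single i t) = lassoObjective X τ y β
      + (-(Xᵀ *ᵥ (y - X *ᵥ β)) i * t + (∑ j, X j i ^ 2) / 2 * t ^ 2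
        + τ * (|β i + t| - |β i|)) := by
  have hquad : ∑ j, (y j - (X *ᵥ (β + Pi.single i t)) j) ^ 2
      = ∑ j, (y j - (X *ᵥ β) j) ^ 2 - 2 * t * (Xᵀ *ᵥ (y - X *ᵥ β)) i
        + t ^ 2 * ∑ j, X j i ^ 2 := calc
    _ = ∑ j, ((y j - (X *ᵥ β) j) ^ 2 - 2 * t * (X j i * (y - X *ᵥ β) j) + t ^ 2 * X j i ^ 2) :=
      Finset.sum_congr rfl fun j _ => by simp [mulVec_add, mulVec_single]; ring
    _ = _ := by
      rw [Finset.sum_add_distrib, Finset.sum_sub_distrib, ← Finset.mul_sum, ← Finset.mul_sum]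
      simp [mulVec, dotProduct]
  have habs : ∑ j, |(β + Pi.single i t : p → ℝ) j| = ∑ j, |β j| + (|β i + t| - |β i|) := by
    rw [← Finset.sum_erase_add _ _ (Finset.mem_univ i),
      ← Finset.sum_erase_add _ _ (Finset.mem_univ i)]
    have : ∀ j ∈ Finset.univ.erase i, |(β + Pi.single i t : p → ℝ) j| = |β j| := fun j hj => by
      simp [Finset.ne_of_mem_erase hj]
    rw [Finset.sum_congr rfl this]
    simp
    ring
  simp only [lassoObjective, hquad, habs]
  ring

/-- Both solutions do no better than their midpoint, where the `ℓ₁` penalty is at most the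
average of theirs. -/
theorem IsLassoSolution.fit_sub_dotProduct_le (hτ : 0 ≤ τ) (h : IsLassoSolution X τ y β)
    (h' : IsLassoSolution X τ y' β') :
    (X *ᵥ β - X *ᵥ β') ⬝ᵥ (X *ᵥ β - X *ᵥ β') ≤ 2 * ((y - y') ⬝ᵥ (X *ᵥ β - X *ᵥ β')) := by
  set M := (1 / 2 : ℝ) • (β + β')
  have hl1 : 2 * ∑ i, |M i| ≤ ∑ i, |β i| + ∑ i, |β' i| := by
    rw [Finset.mul_sum, ← Finset.sum_add_distrib]
    gcongr with i
    simp only [M, Pi.smul_apply, Pi.add_apply, smul_eq_mul, abs_mul]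
    rw [abs_of_pos (by norm_num : (0 : ℝ) < 1 / 2), ← mul_assoc]
    norm_num
    exact abs_add_le _ _
  have hquad : ((∑ i, (y i - (X *ᵥ M) i) ^ 2) + ∑ i, (y' i - (X *ᵥ M) i) ^ 2)
      - ((∑ i, (y i - (X *ᵥ β) i) ^ 2) + ∑ i, (y' i - (X *ᵥ β') i) ^ 2)
      = (y - y') ⬝ᵥ (X *ᵥ β - X *ᵥ β') - (X *ᵥ β - X *ᵥ β') ⬝ᵥ (X *ᵥ β - X *ᵥ β') / 2 := by
    simp only [M, mulVec_smul, mulVec_add, dotProduct, Finset.sum_div, ← Finset.sum_add_distrib,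
      ← Finset.sum_sub_distrib]
    refine Finset.sum_congr rfl fun i _ => ?_
    simp only [Pi.sub_apply, Pi.add_apply, Pi.smul_apply, smul_eq_mul]
    ring
  have hsum := add_le_add (h M) (h' M)
  simp only [lassoObjective] at hsum
  nlinarith [mul_le_mul_of_nonneg_left hl1 hτ]

/-- Fermat's rule along the `i`-th coordinate, where the `ℓ₁` term is differentiable as
`β i ≠ 0`. -/
theorem IsLassoSolution.transpose_mulVec_residual (h : IsLassoSolution X τ y β) {i : p}
    (hi : β i ≠ 0) : (Xᵀ *ᵥ (y - X *ᵥ β)) i = τ * SignType.sign (β i) := by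
  set c := (Xᵀ *ᵥ (y - X *ᵥ β)) i
  set s := ∑ j, X j i ^ 2
  have habs : HasDerivAt (fun t => |β i + t|) (SignType.sign (β i)) 0 :=
    HasDerivAt.comp_const_add (β i) 0 (by simpa using hasDerivAt_abs hi)
  have hpoly : HasDerivAt (fun t => -c * t + s / 2 * t ^ 2) (-c) 0 := by
    simpa using ((hasDerivAt_id' 0).const_mul (-c)).fun_add ((hasDerivAt_pow 2 0).const_mul (s / 2))
  have hderiv : HasDerivAt (fun t => lassoObjective X τ y (β + Pi.single i t))
      (-c + τ * SignType.sign (β i)) 0 := by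
    rw [funext (lassoObjective_add_single X τ y β i), hasDerivAt_const_add_iff]
    exact hpoly.fun_add ((habs.sub_const |β i|).const_mul τ)
  have hmin : IsLocalMin (fun t => lassoObjective X τ y (β + Pi.single i t)) 0 :=
    Eventually.of_forall fun t => by
      simp only [Pi.single_zero, add_zero]
      exact h _
  linarith [hmin.hasDerivAt_eq_zero hderiv]

theorem IsLassoSolution.transpose_submatrix_mulVec_residual_sub (h : IsLassoSolution X τ y β)
    (h' : IsLassoSolution X τ y' β') (hsign : ∀ i, SignType.sign (β i) = SignType.sign (β' i)) :
    (X.submatrix id (fun i : {i // β' i ≠ 0} => (i : p)))ᵀ *ᵥ ((y - X *ᵥ β) - (y' - X *ᵥ β'))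
      = 0 := by
  ext ⟨i, hi⟩
  have hi' : β i ≠ 0 := by rwa [← sign_ne_zero, hsign i, sign_ne_zero]
  have key : (Xᵀ *ᵥ ((y - X *ᵥ β) - (y' - X *ᵥ β'))) i = 0 := by
    rw [mulVec_sub, Pi.sub_apply, h.transpose_mulVec_residual hi',
      h'.transpose_mulVec_residual hi, hsign i, sub_self]
  simpa [mulVec, dotProduct] using key

end Lasso

/-- Lasso: for almost every `y`, the fitted-value map `y ↦ X β̂(y)` is
differentiable at `y` with divergence `rank(X_{J₀ᶜ})`, where `J₀ = {i : β̂ᵢ(y) = 0}` and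
`X_{J₀ᶜ}` consists of the columns of `X` indexed by the complement of `J₀`. -/
theorem divergence_lasso {n d : ℕ} (X : Matrix (Fin n) (Fin d) ℝ)
    (τ : ℝ) (hτ : 0 < τ)
    (βhat : (Fin n → ℝ) → (Fin d → ℝ))
    (hmin : ∀ y, ∀ β : Fin d → ℝ,
      (1 / 2) * (∑ i, (y i - X.mulVec (βhat y) i) ^ 2) + τ * (∑ i, |βhat y i|)
        ≤ (1 / 2) * (∑ i, (y i - X.mulVec β i) ^ 2) + τ * (∑ i, |β i|)) :
    ∀ᵐ y ∂(volume : Measure (Fin n → ℝ)),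
      DifferentiableAt ℝ (fun z => X.mulVec (βhat z)) y ∧
      divg (fun z => X.mulVec (βhat z)) y =
        (Matrix.rank (X.submatrix id
          (fun i : {i : Fin d // βhat y i ≠ 0} => (i : Fin d))) : ℝ) := by
  have hsol : ∀ y, IsLassoSolution X τ y (βhat y) := hmin
  have hlip : LipschitzWith _ fun z => X *ᵥ βhat z :=
    lipschitzWith_of_dotProduct_le fun y y' => (hsol y).fit_sub_dotProduct_le hτ.le (hsol y')
  have hdens : ∀ᵐ y ∂(volume : Measure (Fin n → ℝ)), ∀ σ : Fin d → SignType,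
      y ∈ {z | SignType.sign ∘ βhat z = σ} →
        IsDensityPoint volume {z | SignType.sign ∘ βhat z = σ} y :=
    ae_all_iff.2 fun σ => ae_imp_of_ae_restrict (Besicovitch.ae_tendsto_measure_inter_div volume _)
  filter_upwards [hlip.ae_differentiableAt, hdens] with y hdiff hdens
  have hcone := (hdens _ rfl).tangentConeAt_eq_univ
  refine ⟨hdiff, ?_⟩
  rw [divg_eq_trace]
  refine trace_eq_rank_of_map_mem_range_of_transpose_mulVec_sub_eq_zero _ _
    (fun v => ?_) fun v => ?_
  · exact hdiff.hasFDerivAt.hasFDerivWithinAt.apply_mem_of_sub_mem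
      (Submodule.closed_of_finiteDimensional _)
      (fun z hz => mulVec_sub_mem_range_submatrix (congrFun hz)) (hcone ▸ mem_univ v)
  · have := ((hasFDerivAt_id y).sub hdiff.hasFDerivAt).hasFDerivWithinAt.apply_mem_of_sub_mem
      (Submodule.closed_of_finiteDimensional
        (LinearMap.ker (X.submatrix id (fun i : {i // βhat y i ≠ 0} => (i : Fin d)))ᵀ.mulVecLin))
      (fun z hz => (hsol z).transpose_submatrix_mulVec_residual_sub (hsol y) (congrFun hz))
      (hcone ▸ mem_univ v)
    simpa using this
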